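/- arXiv:1701.05296 — 3 statements merged into one kernel-verified Lean document; each statement's English description precedes it below -/
import Mathlib

section
/- Consider the n-vertex even cycle graph with vertices u_1,…,u_n (indices mod n) and sink u_n. Suppose real numbers η_1,…,η_{n-1} in [0,1] and β > 0 satisfy the steady-state equations: η_1 = η_2/2 + β, η_{n-1} = η_{n-2}/2 + β, and for 2 ≤ i ≤ n-2, η_i = (η_{i-1} + η_{i+1})/2 + β. Then β ≤ 4/n². -/
/-!
Extend `η` by the sink value `0` at both ends `0` and `n` of the path obtained by cutting the
cycle at the sink. The steady-state equations then say that this sequence has constant second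
difference `-2β` with zero boundary values, which forces `η i = β i (n - i)`. At the antipode
`i = n / 2` of the sink this gives `β n² / 4 = η (n / 2) ≤ 1`.
-/

lemma eq_mul_of_second_diff_eq_zero {N : ℕ} {h : ℕ → ℝ} (h0 : h 0 = 0)
    (hrec : ∀ k, k + 2 ≤ N → h (k + 2) - h (k + 1) = h (k + 1) - h k) :
    ∀ k, k ≤ N → h k = k * h 1 := by
  suffices ∀ k, k + 1 ≤ N → h k = k * h 1 ∧ h (k + 1) = (k + 1) * h 1 by
    intro k hk
    cases k with
    | zero => simp [h0]
    | succ j => simpa using (this j hk).2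
  intro k
  induction k with
  | zero => simp [h0]
  | succ k ih =>
    intro hk
    obtain ⟨hk0, hk1⟩ := ih (by omega)
    have := hrec k hk
    refine ⟨by simpa using hk1, ?_⟩
    push_cast
    linarith

lemma eq_mul_sub_of_poisson_path {N : ℕ} (hN : 0 < N) {g : ℕ → ℝ} {β : ℝ}
    (g0 : g 0 = 0) (gN : g N = 0)
    (hrec : ∀ i, 0 < i → i < N → g i = (g (i - 1) + g (i + 1)) / 2 + β) :
    ∀ i, i ≤ N → g i = β * i * (N - i) := by
  set h : ℕ → ℝ := fun i => g i - β * i * (N - i) with h_def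
  have hlin := eq_mul_of_second_diff_eq_zero (N := N) (h := h) (by simp [h_def, g0])
    (fun k hk => by
      have := hrec (k + 1) (by omega) (by omega)
      simp only [h_def, Nat.add_sub_cancel] at this ⊢
      push_cast
      linarith)
  have h1 : h 1 = 0 := by
    have hNN := hlin N le_rfl
    simp only [h_def, gN, sub_self, mul_zero] at hNN
    exact (mul_eq_zero.mp hNN.symm).resolve_left (by positivity)
  intro i hi
  have := hlin i hi
  rw [h1, mul_zero] at this
  exact sub_eq_zero.mp this

/-- The cycle cut open at the sink `0 ≡ n` into the path `0, …, n`. -/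
def extendBySink (n : ℕ) (η : ℕ → ℝ) : ℕ → ℝ :=
  fun i => if i = 0 ∨ i = n then 0 else η i

lemma extendBySink_poisson {n : ℕ} (hn : 3 ≤ n) {η : ℕ → ℝ} {β : ℝ}
    (h1 : η 1 = η 2 / 2 + β)
    (hlast : η (n - 1) = η (n - 2) / 2 + β)
    (hmid : ∀ i, 2 ≤ i → i ≤ n - 2 → η i = (η (i - 1) + η (i + 1)) / 2 + β) :
    ∀ i, 0 < i → i < n →
      extendBySink n η i = (extendBySink n η (i - 1) + extendBySink n η (i + 1)) / 2 + β := by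
  intro i hi0 hin
  simp only [extendBySink]
  rcases Nat.lt_or_ge i 2 with hi | hi
  · obtain rfl : i = 1 := by omega
    simp [show (2 : ℕ) ≠ n by omega, show (1 : ℕ) ≠ n by omega, h1]
  rcases Nat.lt_or_ge (n - 2) i with hi' | hi'
  · obtain rfl : i = n - 1 := by omega
    rw [show n - 1 - 1 = n - 2 by omega, show n - 1 + 1 = n by omega]
    simp [show n - 1 ≠ 0 by omega, show n - 1 ≠ n by omega, show n - 2 ≠ 0 by omega,
      show n - 2 ≠ n by omega, hlast]
  · simp [show i ≠ 0 by omega, show i ≠ n by omega, show i - 1 ≠ 0 by omega,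
      show i - 1 ≠ n by omega, show i + 1 ≠ n by omega, hmid i hi hi']

theorem cycle_rate_bound_general (n : ℕ) (hn : 4 ≤ n) (heven : Even n)
    (η : ℕ → ℝ) (β : ℝ)
    (hrange : ∀ i, 1 ≤ i → i ≤ n - 1 → 0 ≤ η i ∧ η i ≤ 1)
    (h1 : η 1 = η 2 / 2 + β)
    (hlast : η (n - 1) = η (n - 2) / 2 + β)
    (hmid : ∀ i, 2 ≤ i → i ≤ n - 2 → η i = (η (i - 1) + η (i + 1)) / 2 + β) :
    β ≤ 4 / (n : ℝ) ^ 2 := by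
  have hpoisson := extendBySink_poisson (by omega) h1 hlast hmid
  obtain ⟨m, rfl⟩ := heven
  have hη_antipode : η m = β * m ^ 2 := by
    have := eq_mul_sub_of_poisson_path (by omega) (by simp [extendBySink])
      (by simp [extendBySink]) hpoisson m (by omega)
    simp only [extendBySink, show ¬(m = 0 ∨ m = m + m) by omega, if_false] at this
    rw [this]
    push_cast
    ring
  have hle : β * m ^ 2 ≤ 1 := hη_antipode ▸ (hrange m (by omega) (by omega)).2
  rw [le_div_iff₀ (by positivity)]
  push_cast
  linarith

/-- Exact-rate bound for the even cycle with sink `u_n`: the steady-state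
equations force `β ≤ 4/n²`. -/
theorem cycle_rate_bound (n : ℕ) (hn : 4 ≤ n) (heven : Even n)
    (η : ℕ → ℝ) (β : ℝ) (hβ : 0 < β)
    (hrange : ∀ i, 1 ≤ i → i ≤ n - 1 → 0 ≤ η i ∧ η i ≤ 1)
    (h1 : η 1 = η 2 / 2 + β)
    (hlast : η (n - 1) = η (n - 2) / 2 + β)
    (hmid : ∀ i, 2 ≤ i → i ≤ n - 2 → η i = (η (i - 1) + η (i + 1)) / 2 + β) :
    β ≤ 4 / (n : ℝ) ^ 2 :=
  cycle_rate_bound_general n hn heven η β hrange h1 hlast hmid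
end

section
/- Let η_0, η_1, …, η_x be real numbers with η_0 = 0 and η_x ≤ 1, and β > 0, satisfying for every r with 1 ≤ r ≤ x the equation β · (∑_{i=r}^{x} C(x,i)) = (η_r − η_{r-1}) · (r/x) · C(x,r). Then β ≤ 5 / (x · (3/2)^x). -/
/-!
The cut equation at `r = 1` reads `η 1 = β (2^x - 1)`. Every cut equation has a nonnegative left
side, so `η` is nondecreasing on `0, …, x` and `β (2^x - 1) ≤ η x ≤ 1`. It remains to compare
`2^x - 1` with `x (3/2)^x`, which is an induction on `x`.
-/

open Finset

theorem sum_Icc_one_choose (n : ℕ) : ∑ i ∈ Icc 1 n, (n.choose i : ℝ) = 2 ^ n - 1 := by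
  have h := sum_eq_sum_Ico_succ_bot (Nat.succ_pos n) (fun i => (n.choose i : ℝ))
  rw [← range_eq_Ico, ← Nat.cast_sum, Nat.sum_range_choose, zero_add, Nat.succ_eq_add_one,
    Ico_add_one_right_eq_Icc, Nat.choose_zero_right] at h
  push_cast at h
  linarith

theorem natCast_mul_three_halves_pow_le (n : ℕ) : (n : ℝ) * (3 / 2) ^ n ≤ 5 * (2 ^ n - 1) := by
  induction n with
  | zero => simp
  | succ n ih =>
    have hpow : ((3 : ℝ) / 2) ^ n ≤ 2 ^ n := pow_le_pow_left₀ (by norm_num) (by norm_num) n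
    have hpos : (0 : ℝ) ≤ 2 ^ n := by positivity
    push_cast
    rw [pow_succ, pow_succ]
    linarith

/-- The data generated at distance `≥ r` from the sink must cross the cut between layers `r - 1` and
`r`; a node of layer `r` forwards across it with probability `r / n`. -/
def IsHypercubeCutSolution (n : ℕ) (η : ℕ → ℝ) (β : ℝ) : Prop :=
  ∀ r, 1 ≤ r → r ≤ n →
    β * (∑ i ∈ Icc r n, (n.choose i : ℝ)) = (η r - η (r - 1)) * ((r : ℝ) / n) * (n.choose r : ℝ)

namespace IsHypercubeCutSolution

variable {n : ℕ} {η : ℕ → ℝ} {β : ℝ}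

theorem sub_one_le (h : IsHypercubeCutSolution n η β) (hβ : 0 ≤ β) {r : ℕ} (hr : 1 ≤ r)
    (hrn : r ≤ n) : η (r - 1) ≤ η r := by
  have hcoef : 0 < (r : ℝ) / n * n.choose r := by
    have : 0 < n.choose r := Nat.choose_pos hrn
    have : 0 < n := by omega
    positivity
  have hflow : 0 ≤ (η r - η (r - 1)) * ((r : ℝ) / n * n.choose r) := by
    rw [← mul_assoc, ← h r hr hrn]
    positivity
  linarith [nonneg_of_mul_nonneg_left hflow hcoef]

theorem monotoneOn (h : IsHypercubeCutSolution n η β) (hβ : 0 ≤ β) :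
    MonotoneOn η (Set.Icc 0 n) :=
  monotoneOn_of_le_add_one Set.ordConnected_Icc fun a _ _ ha1 =>
    h.sub_one_le hβ (r := a + 1) (by omega) ha1.2

theorem apply_one_eq (h : IsHypercubeCutSolution n η β) (hn : 1 ≤ n) (h0 : η 0 = 0) :
    η 1 = β * (2 ^ n - 1) := by
  have h1 := h 1 le_rfl hn
  rw [sum_Icc_one_choose, Nat.choose_one_right, Nat.cast_one, Nat.sub_self, h0, sub_zero] at h1
  have : (n : ℝ) ≠ 0 := by positivity
  rw [h1]
  field_simp

end IsHypercubeCutSolution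

/-- Exact-rate bound for the x-dimensional hypercube with all non-sink nodes as
sources: the cut steady-state equations force `β ≤ 5/(x·(3/2)^x)`. -/
theorem hypercube_rate_bound (x : ℕ) (hx : 1 ≤ x) (η : ℕ → ℝ) (β : ℝ)
    (hβ : 0 < β) (h0 : η 0 = 0) (hx1 : η x ≤ 1)
    (hcut : ∀ r, 1 ≤ r → r ≤ x →
      β * (∑ i ∈ Finset.Icc r x, (x.choose i : ℝ)) =
        (η r - η (r - 1)) * ((r : ℝ) / x) * (x.choose r : ℝ)) :
    β ≤ 5 / ((x : ℝ) * (3 / 2) ^ x) := by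
  have hsol : IsHypercubeCutSolution x η β := hcut
  have hβ_total : β * (2 ^ x - 1) ≤ 1 := calc
    β * (2 ^ x - 1) = η 1 := (hsol.apply_one_eq hx h0).symm
    _ ≤ η x := hsol.monotoneOn hβ.le ⟨zero_le_one, hx⟩ ⟨Nat.zero_le x, le_rfl⟩ hx
    _ ≤ 1 := hx1
  rw [le_div_iff₀ (by positivity)]
  calc β * (x * (3 / 2) ^ x) ≤ β * (5 * (2 ^ x - 1)) :=
        mul_le_mul_of_nonneg_left (natCast_mul_three_halves_pow_le x) hβ.le
    _ = 5 * (β * (2 ^ x - 1)) := by ring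
    _ ≤ 5 := by linarith
end

section
/- Consider the x-dimensional hypercube steady-state system with only two sources located at Hamming distances x and x−1 from the all-zeros sink: real numbers η_0 = 0, η_1, …, η_x with η_x ≤ 1 and β > 0 satisfying β = (η_x − η_{x−1}) and, for 1 ≤ r ≤ x−1, 2β = (η_r − η_{r−1})·(r/x)·C(x,r). Then β ≤ 2^x / (2x + 2^x). -/
/-!
By `(r / x) * C(x, r) = C(x - 1, r - 1) ≤ 2^(x-1)`, every cut equation forces the increment
`η r - η (r - 1)` to be at least `2β / 2^(x-1)`. Telescoping over `r = 1, …, x - 1` gives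
`(x - 1) * 2β / 2^(x-1) ≤ η (x - 1) = η x - β ≤ 1 - β`, that is
`β ≤ 2^x / (4(x - 1) + 2^x)`, which is at most `2^x / (2x + 2^x)` as soon as `x ≥ 2`.
-/

open Finset

theorem nsmul_le_sub_of_forall_le_sub_succ {α : Type*} [AddCommGroup α] [PartialOrder α]
    [IsOrderedAddMonoid α] {f : ℕ → α} {c : α} {m : ℕ}
    (h : ∀ i < m, c ≤ f (i + 1) - f i) : m • c ≤ f m - f 0 := by
  have := (range m).card_nsmul_le_sum (fun i ↦ f (i + 1) - f i) c
    fun i hi ↦ h i (mem_range.mp hi)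
  rwa [card_range, sum_range_sub] at this

theorem Nat.cast_div_mul_choose {K : Type*} [Field K] [CharZero K] {x r : ℕ} (hx : 0 < x)
    (hr : 0 < r) : (r : K) / x * x.choose r = (x - 1).choose (r - 1) := by
  obtain ⟨n, rfl⟩ := Nat.exists_eq_add_of_lt hx
  obtain ⟨k, rfl⟩ := Nat.exists_eq_add_of_lt hr
  have h := Nat.add_one_mul_choose_eq n k
  simp only [zero_add, Nat.add_sub_cancel] at h ⊢
  rw [div_mul_eq_mul_div, div_eq_iff (Nat.cast_ne_zero.mpr n.succ_ne_zero)]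
  exact_mod_cast (mul_comm _ _).trans (h.symm.trans (mul_comm _ _))

theorem le_mul_of_eq_mul_of_le {K : Type*} [Field K] [LinearOrder K] [IsStrictOrderedRing K]
    {a d c M : K} (ha : 0 ≤ a) (hc : 0 < c) (h : a = d * c)
    (hcM : c ≤ M) : a ≤ d * M := by
  have hd : 0 ≤ d := by
    rw [← div_eq_of_eq_mul hc.ne' h]
    positivity
  exact h.trans_le (mul_le_mul_of_nonneg_left hcM hd)

/-- Exact-rate bound for the x-dimensional hypercube with two sources at
distances `x` and `x-1` from the sink: `β ≤ 2^x / (2x + 2^x)`. -/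
theorem hypercube_two_sources_rate (x : ℕ) (hx : 2 ≤ x) (η : ℕ → ℝ) (β : ℝ)
    (hβ : 0 < β) (h0 : η 0 = 0) (hηx : η x ≤ 1)
    (htop : β = η x - η (x - 1))
    (hcut : ∀ r, 1 ≤ r → r ≤ x - 1 →
      2 * β = (η r - η (r - 1)) * ((r : ℝ) / x) * (x.choose r : ℝ)) :
    β ≤ (2 : ℝ) ^ x / (2 * x + 2 ^ x) := by
  set P : ℝ := 2 ^ (x - 1) with hP
  have hPpos : 0 < P := by positivity
  have hincr : ∀ i < x - 1, 2 * β / P ≤ η (i + 1) - η i := by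
    intro i hi
    have hcoef := Nat.cast_div_mul_choose (K := ℝ) (x := x) (r := i + 1) (by omega) i.succ_pos
    rw [div_le_iff₀ hPpos]
    refine le_mul_of_eq_mul_of_le (c := ((x - 1).choose i : ℝ)) (by positivity) ?_ ?_ ?_
    · exact_mod_cast Nat.choose_pos (by omega)
    · have h := hcut (i + 1) (by omega) hi
      rwa [mul_assoc, hcoef, Nat.add_sub_cancel] at h
    · rw [hP]
      exact_mod_cast Nat.choose_le_two_pow (x - 1) i
  have htel := nsmul_le_sub_of_forall_le_sub_succ hincr
  rw [nsmul_eq_mul, h0, sub_zero, Nat.cast_sub (by omega), Nat.cast_one, mul_div_assoc',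
    div_le_iff₀ hPpos] at htel
  have hsum : ((x : ℝ) - 1) * (2 * β) ≤ (1 - β) * P :=
    htel.trans (mul_le_mul_of_nonneg_right (by linarith) hPpos.le)
  have hx' : (2 : ℝ) ≤ x := by exact_mod_cast hx
  have h2x : (2 : ℝ) ^ x = 2 * P := by rw [hP, ← pow_succ', Nat.sub_add_cancel (by omega)]
  rw [h2x, le_div_iff₀ (by positivity)]
  nlinarith [hsum, hβ, hx']
end
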